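/- Let 0 < γ < γ′ < 1 with γ′ < (1+γ²)/2, and set α = 2γ′ − 1, β = γ², I = (α, β], J = (γ, γ′]. Let n ≥ 1 and let q be a prime factor of g(n). If the interval qI = (αq, βq] contains at least one prime divisor of g(n), then all primes belonging to qJ = (γq, γ′q], with at most one exception, divide g(n). -/

import Mathlib

/-
Let `ℓ(m) = ∑_{p^k ∥ m} p^k`. A permutation of order `m` needs at least `ℓ(m)` points, and
disjoint cycles of the lengths `p^k ∥ m` realise order `m`; so `g(n)` is the largest `m` with
`ℓ(m) ≤ n`. If two primes `p₁ ≠ p₂` of `qJ` did not divide `g(n)`, replacing the factor `p q`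
of `g(n)` (with `p ∈ qI` a prime divisor) by `p₁ p₂` would keep `ℓ ≤ n`, since
`p₁ + p₂ ≤ 2γ′q < p + q`, but would increase the order, since `p₁ p₂ > γ²q² ≥ p q`.
-/

/-- Landau's function: the maximal order of a permutation of the symmetric group on `n` letters. -/
noncomputable def landau (n : ℕ) : ℕ :=
  Finset.univ.sup fun σ : Equiv.Perm (Fin n) => orderOf σ

/-- The largest prime factor of `m` (0 if `m` has no prime factor). -/
def maxPrimeFac (m : ℕ) : ℕ := m.primeFactors.sup id

open Equiv

def primePowerSum (m : ℕ) : ℕ := ∑ p ∈ m.primeFactors, p ^ m.factorization p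

@[simp]
lemma primePowerSum_zero : primePowerSum 0 = 0 := by simp [primePowerSum]

@[simp]
lemma primePowerSum_one : primePowerSum 1 = 0 := by simp [primePowerSum]

lemma primePowerSum_prime_pow {p k : ℕ} (hp : p.Prime) (hk : k ≠ 0) :
    primePowerSum (p ^ k) = p ^ k := by
  simp [primePowerSum, Nat.primeFactors_prime_pow hk hp, hp.factorization_pow]

lemma primePowerSum_prime {p : ℕ} (hp : p.Prime) : primePowerSum p = p := by
  simpa using primePowerSum_prime_pow hp one_ne_zero

lemma primePowerSum_mul_of_coprime {a b : ℕ} (h : a.Coprime b) :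
    primePowerSum (a * b) = primePowerSum a + primePowerSum b := by
  have hdisj := h.disjoint_primeFactors
  rw [primePowerSum, h.primeFactors_mul, Finset.sum_union hdisj,
    Nat.factorization_mul_of_coprime h]
  congr 1 <;> refine Finset.sum_congr rfl fun p hp => ?_
  · have : p ∉ b.primeFactors := Finset.disjoint_left.1 hdisj hp
    simp [Finsupp.notMem_support_iff.1 (Nat.support_factorization b ▸ this)]
  · have : p ∉ a.primeFactors := Finset.disjoint_right.1 hdisj hp
    simp [Finsupp.notMem_support_iff.1 (Nat.support_factorization a ▸ this)]

lemma primePowerSum_prime_mul {p m : ℕ} (hp : p.Prime) (h : ¬p ∣ m) :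
    primePowerSum (p * m) = p + primePowerSum m := by
  rw [primePowerSum_mul_of_coprime ((hp.coprime_iff_not_dvd).2 h), primePowerSum_prime hp]

lemma primePowerSum_add_le_prime_mul {p m : ℕ} (hp : p.Prime) (hm : m ≠ 0) :
    primePowerSum m + p ≤ primePowerSum (p * m) := by
  obtain ⟨k, r, hr, rfl⟩ := Nat.exists_eq_pow_mul_and_not_dvd hm p hp.one_lt.ne'
  have hcop (j : ℕ) : (p ^ j).Coprime r := ((hp.coprime_iff_not_dvd).2 hr).pow_left j
  rw [← mul_assoc, ← pow_succ', primePowerSum_mul_of_coprime (hcop _),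
    primePowerSum_mul_of_coprime (hcop _), primePowerSum_prime_pow hp k.succ_ne_zero]
  rcases eq_or_ne k 0 with rfl | hk
  · simp [add_comm]
  · rw [primePowerSum_prime_pow hp hk, pow_succ]
    nlinarith [hp.two_le, Nat.le_self_pow hk p]

lemma primePowerSum_le_of_dvd {d m : ℕ} (hm : m ≠ 0) (h : d ∣ m) :
    primePowerSum d ≤ primePowerSum m := by
  have hd : d ≠ 0 := ne_zero_of_dvd_ne_zero hm h
  calc primePowerSum d ≤ ∑ p ∈ d.primeFactors, p ^ m.factorization p :=
        Finset.sum_le_sum fun p hp => Nat.pow_le_pow_right (Nat.prime_of_mem_primeFactors hp).pos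
          ((Nat.factorization_le_iff_dvd hd hm).2 h p)
    _ ≤ primePowerSum m := Finset.sum_le_sum_of_subset (Nat.primeFactors_mono h hm)

lemma primePowerSum_lcm_le (a b : ℕ) :
    primePowerSum (Nat.lcm a b) ≤ primePowerSum a + primePowerSum b := by
  rcases eq_or_ne a 0 with rfl | ha
  · simp
  rcases eq_or_ne b 0 with rfl | hb
  · simp
  rw [← Nat.factorizationLCMLeft_mul_factorizationLCMRight ha hb,
    primePowerSum_mul_of_coprime (Nat.coprime_factorizationLCMLeft_factorizationLCMRight a b)]
  exact add_le_add (primePowerSum_le_of_dvd ha (Nat.factorizationLCMLeft_dvd_left a b))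
    (primePowerSum_le_of_dvd hb (Nat.factorizationLCMRight_dvd_right a b))

lemma primePowerSum_le_self (m : ℕ) : primePowerSum m ≤ m := by
  induction m using Nat.recOnPrimeCoprime with
  | zero => simp
  | prime_pow p k hp =>
    rcases eq_or_ne k 0 with rfl | hk
    · simp
    · rw [primePowerSum_prime_pow hp hk]
  | coprime a b ha hb hab iha ihb =>
    rw [primePowerSum_mul_of_coprime hab]
    exact (add_le_add iha ihb).trans (Nat.add_le_mul ha hb)

lemma primePowerSum_multiset_lcm_le_sum (s : Multiset ℕ) : primePowerSum s.lcm ≤ s.sum := by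
  induction s using Multiset.induction_on with
  | empty => simp
  | cons a s ih =>
    rw [Multiset.lcm_cons, Multiset.sum_cons, lcm_eq_nat_lcm]
    exact (primePowerSum_lcm_le a s.lcm).trans (add_le_add (primePowerSum_le_self a) ih)

section Perm

variable {α : Type*} [Fintype α] [DecidableEq α]

lemma primePowerSum_orderOf_le (σ : Perm α) : primePowerSum (orderOf σ) ≤ Fintype.card α := by
  rw [← σ.lcm_cycleType]
  calc primePowerSum σ.cycleType.lcm ≤ σ.cycleType.sum := primePowerSum_multiset_lcm_le_sum _
    _ = σ.support.card := σ.sum_cycleType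
    _ ≤ Fintype.card α := σ.support.card_le_univ

lemma exists_perm_orderOf_eq {m : ℕ} (hm : m ≠ 0) (h : primePowerSum m ≤ Fintype.card α) :
    ∃ σ : Perm α, orderOf σ = m := by
  set t := m.primeFactors.val.map fun p => p ^ m.factorization p
  have ht : ∀ a ∈ t, 2 ≤ a := by
    simp only [t, Multiset.mem_map, Finset.mem_val, forall_exists_index, and_imp]
    rintro _ p hp rfl
    exact Nat.one_lt_pow ((Nat.prime_of_mem_primeFactors hp).factorization_pos_of_dvd hm
      (Nat.dvd_of_mem_primeFactors hp)).ne' (Nat.prime_of_mem_primeFactors hp).one_lt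
  obtain ⟨σ, hσ⟩ := (Perm.exists_with_cycleType_iff α).2 ⟨h.trans_eq' rfl, ht⟩
  refine ⟨σ, ?_⟩
  rw [← σ.lcm_cycleType, hσ, ← Finset.lcm_def, Finset.lcm_eq_prod,
    ← Nat.prod_primeFactors_pow_factorization hm]
  intro p hp p' hp' hne
  exact Nat.coprime_pow_primes _ _ (Nat.prime_of_mem_primeFactors hp)
    (Nat.prime_of_mem_primeFactors hp') hne

end Perm

lemma exists_orderOf_eq_landau (n : ℕ) : ∃ σ : Perm (Fin n), orderOf σ = landau n := by
  obtain ⟨σ, -, hσ⟩ := Finset.exists_mem_eq_sup Finset.univ Finset.univ_nonempty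
    fun σ : Perm (Fin n) => orderOf σ
  exact ⟨σ, hσ.symm⟩

lemma landau_ne_zero (n : ℕ) : landau n ≠ 0 := by
  obtain ⟨σ, hσ⟩ := exists_orderOf_eq_landau n
  exact hσ ▸ (orderOf_pos σ).ne'

lemma primePowerSum_landau_le (n : ℕ) : primePowerSum (landau n) ≤ n := by
  obtain ⟨σ, hσ⟩ := exists_orderOf_eq_landau n
  simpa [hσ] using primePowerSum_orderOf_le σ

lemma le_landau_of_primePowerSum_le {m n : ℕ} (hm : m ≠ 0) (h : primePowerSum m ≤ n) :
    m ≤ landau n := by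
  obtain ⟨σ, hσ⟩ := exists_perm_orderOf_eq (α := Fin n) hm (by simpa using h)
  exact hσ ▸ Finset.le_sup (f := fun σ : Perm (Fin n) => orderOf σ) (Finset.mem_univ σ)

theorem mul_le_mul_of_dvd_landau_of_not_dvd_landau {n p q p₁ p₂ : ℕ} (hp : p.Prime)
    (hq : q.Prime) (hpq : p ≠ q) (hp₁ : p₁.Prime) (hp₂ : p₂.Prime) (h₁₂ : p₁ ≠ p₂)
    (hpd : p ∣ landau n) (hqd : q ∣ landau n) (hp₁d : ¬p₁ ∣ landau n) (hp₂d : ¬p₂ ∣ landau n)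
    (hsum : p₁ + p₂ ≤ p + q) : p₁ * p₂ ≤ p * q := by
  obtain ⟨c, hc⟩ := ((Nat.coprime_primes hp hq).2 hpq).mul_dvd_of_dvd_of_dvd hpd hqd
  have hc0 : c ≠ 0 := by rintro rfl; exact landau_ne_zero n (by simpa using hc)
  have hcd : c ∣ landau n := hc ▸ dvd_mul_left c _
  have hcost_c : primePowerSum c + q + p ≤ n :=
    calc primePowerSum c + q + p ≤ primePowerSum (q * c) + p :=
          Nat.add_le_add_right (primePowerSum_add_le_prime_mul hq hc0) p
      _ ≤ primePowerSum (p * (q * c)) :=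
          primePowerSum_add_le_prime_mul hp (mul_ne_zero hq.ne_zero hc0)
      _ = primePowerSum (landau n) := by rw [hc, mul_assoc]
      _ ≤ n := primePowerSum_landau_le n
  have hp₁c : ¬p₁ ∣ p₂ * c := fun h => ((hp₁.dvd_mul).1 h).elim
    (fun h => h₁₂ ((Nat.prime_dvd_prime_iff_eq hp₁ hp₂).1 h)) fun h => hp₁d (h.trans hcd)
  have hswap : p₁ * (p₂ * c) ≤ landau n := by
    refine le_landau_of_primePowerSum_le (by positivity [hp₁.ne_zero, hp₂.ne_zero]) ?_
    rw [primePowerSum_prime_mul hp₁ hp₁c,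
      primePowerSum_prime_mul hp₂ fun h => hp₂d (h.trans hcd)]
    omega
  rw [hc, ← mul_assoc] at hswap
  exact le_of_mul_le_mul_right hswap (Nat.pos_of_ne_zero hc0)

theorem stmt8_general (γ γ' : ℝ) (h0 : 0 < γ) (n q : ℕ) (hq : q.Prime)
    (hqd : q ∣ landau n)
    (hI : ∃ p : ℕ, p.Prime ∧ p ∣ landau n ∧
      (2 * γ' - 1) * (q : ℝ) < (p : ℝ) ∧ (p : ℝ) ≤ γ ^ 2 * (q : ℝ)) :
    ∀ p₁ p₂ : ℕ, p₁.Prime → p₂.Prime →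
      γ * (q : ℝ) < (p₁ : ℝ) → (p₁ : ℝ) ≤ γ' * (q : ℝ) →
      γ * (q : ℝ) < (p₂ : ℝ) → (p₂ : ℝ) ≤ γ' * (q : ℝ) →
      ¬ p₁ ∣ landau n → ¬ p₂ ∣ landau n → p₁ = p₂ := by
  intro p₁ p₂ hp₁ hp₂ hγ₁ hγ'₁ hγ₂ hγ'₂ hp₁d hp₂d
  by_contra h₁₂
  obtain ⟨p, hp, hpd, hpα, hpβ⟩ := hI
  have hγq : 0 ≤ γ * q := by positivity
  have hsum : (p₁ + p₂ : ℝ) < p + q := by linarith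
  have hprod : (p * q : ℝ) < p₁ * p₂ := by
    nlinarith [mul_le_mul_of_nonneg_right hpβ (Nat.cast_nonneg q), mul_lt_mul'' hγ₁ hγ₂ hγq hγq]
  have hpq : p ≠ q := by
    -- `p₁ + p₂ < 2q` and `p₁ p₂ > q²` would contradict AM-GM
    rintro rfl
    nlinarith [sq_nonneg ((p₁ : ℝ) - p₂)]
  have := mul_le_mul_of_dvd_landau_of_not_dvd_landau hp hq hpq hp₁ hp₂ h₁₂ hpd hqd hp₁d hp₂d
    (by exact_mod_cast hsum.le)
  exact hprod.not_ge (by exact_mod_cast this)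

/-- Grantham's lemma: with α = 2γ′ − 1, β = γ², if q ∣ g(n) is prime and the
interval (αq, βq] contains a prime divisor of g(n), then all primes of (γq, γ′q],
with at most one exception, divide g(n). -/
theorem stmt8 (γ γ' : ℝ) (h0 : 0 < γ) (h1 : γ < γ') (h2 : γ' < 1)
    (h3 : γ' < (1 + γ ^ 2) / 2) (n q : ℕ) (hn : 1 ≤ n) (hq : q.Prime)
    (hqd : q ∣ landau n)
    (hI : ∃ p : ℕ, p.Prime ∧ p ∣ landau n ∧
      (2 * γ' - 1) * (q : ℝ) < (p : ℝ) ∧ (p : ℝ) ≤ γ ^ 2 * (q : ℝ)) :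
    ∀ p₁ p₂ : ℕ, p₁.Prime → p₂.Prime →
      γ * (q : ℝ) < (p₁ : ℝ) → (p₁ : ℝ) ≤ γ' * (q : ℝ) →
      γ * (q : ℝ) < (p₂ : ℝ) → (p₂ : ℝ) ≤ γ' * (q : ℝ) →
      ¬ p₁ ∣ landau n → ¬ p₂ ∣ landau n → p₁ = p₂ :=
  stmt8_general γ γ' h0 n q hq hqd hI
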